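/- Let N be a positive integer, τ = u + iv ∈ H, and let x₁, x₂ be real numbers with x₁x₂ > 0; set n := x₁x₂/N. Then ∫_0^∞ φ*_τ(ι_t(x₁,x₂)) dt/t = sgn(x₁)·e(−nτ)·Γ(0, 4πvn), the integral converging absolutely. Equivalently, ∫_0^∞ sgn(t^{−1}x₁ + t x₂)·erfc( √(πv/N)·|t^{−1}x₁ + t x₂| ) dt/t = sgn(x₁)·Γ(0, 4πvn). -/

import Mathlib

/-! For `t > 0` and `x₁x₂ > 0` the sign of `t⁻¹x₁ + tx₂` is that of `x₁`, its absolute value is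
`t⁻¹|x₁| + t|x₂|`, and the quadratic form `y² - x²` at `ι_t(x₁, x₂)` is `-2x₁x₂/N` independently
of `t`. After rescaling `t`, both integrals therefore reduce to
`F(m) = ∫₀^∞ erfc(m(t⁻¹ + t)) dt/t` with `m² = πv x₁x₂/N`.

Differentiating under the integral sign and substituting `u = t - t⁻¹`, for which
`du = (1 + t⁻²) dt` and `(t⁻¹ + t)² = u² + 4`, turns `F'(m)` into a Gaussian integral:
`F'(m) = -2e^{-4m²}/m`, which is also the derivative of `m ↦ Γ(0, 4m²)`. Both functions tend to
`0` as `m → ∞`, hence they agree. -/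

open MeasureTheory Filter Set

noncomputable section

/-- `e(z) = exp(2πiz)` -/
def eC (z : ℂ) : ℂ := Complex.exp (2 * Real.pi * Complex.I * z)

/-- The complementary error function `erfc(x) = (2/√π)∫_x^∞ e^{-r²} dr`. -/
def erfc (x : ℝ) : ℝ := (2 / Real.sqrt Real.pi) * ∫ r in Set.Ioi x, Real.exp (-(r ^ 2))

/-- The incomplete Gamma function at `s = 0`: `Γ(0,x) = ∫_x^∞ e^{-t}·t⁻¹ dt`. -/
def Gamma0 (x : ℝ) : ℝ := ∫ t in Set.Ioi x, Real.exp (-t) / t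

/-- `φ*_τ(x,y) = e(((y²-x²)/2)τ)·sgn(x)·erfc(√(2πv)|x|)`. -/
def phiStar (τ : ℂ) (x y : ℝ) : ℂ :=
  eC ((((y : ℂ) ^ 2 - (x : ℂ) ^ 2) / 2) * τ) * (Real.sign x : ℂ) *
    (erfc (Real.sqrt (2 * Real.pi * τ.im) * |x|) : ℂ)

/-- The isometry `ι_t(x₁,x₂) = ((t⁻¹x₁+tx₂)/√(2N), (t⁻¹x₁-tx₂)/√(2N))`. -/
def iota (N : ℕ) (t x₁ x₂ : ℝ) : ℝ × ℝ :=
  ((t⁻¹ * x₁ + t * x₂) / Real.sqrt (2 * N), (t⁻¹ * x₁ - t * x₂) / Real.sqrt (2 * N))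

open Real Topology

section TailIntegral

variable {f : ℝ → ℝ} {a : ℝ}

theorem hasDerivAt_setIntegral_Ioi (hf : IntegrableOn f (Ioi a)) {x : ℝ} (hax : a < x)
    (hfx : ContinuousAt f x) : HasDerivAt (fun y => ∫ r in Ioi y, f r) (-f x) x := by
  have htail : (fun y => ∫ r in Ioi y, f r) =ᶠ[𝓝 x]
      fun y => (∫ r in Ioi a, f r) - ∫ r in a..y, f r := by
    filter_upwards [eventually_gt_nhds hax] with y hy
    rw [← intervalIntegral.integral_Ioi_sub_Ioi hf hy.le, sub_sub_cancel]
  have hf_int : IntervalIntegrable f volume a x :=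
    (intervalIntegrable_iff_integrableOn_Ioc_of_le hax.le).2 (hf.mono_set Ioc_subset_Ioi_self)
  have hd := intervalIntegral.integral_hasDerivAt_right hf_int
    (AEStronglyMeasurable.stronglyMeasurableAtFilter_of_mem hf.aestronglyMeasurable
      (Ioi_mem_nhds hax)) hfx
  exact (hd.const_sub _).congr_of_eventuallyEq htail

theorem tendsto_setIntegral_Ioi_atTop (hf : IntegrableOn f (Ioi a)) :
    Tendsto (fun y => ∫ r in Ioi y, f r) atTop (𝓝 0) := by
  have h := (intervalIntegral_tendsto_integral_Ioi a hf tendsto_id).const_sub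
    (∫ r in Ioi a, f r)
  rw [sub_self] at h
  refine h.congr' ?_
  filter_upwards [eventually_ge_atTop a] with y hy
  rw [id, ← intervalIntegral.integral_Ioi_sub_Ioi hf hy, sub_sub_cancel]

end TailIntegral

section Erfc

theorem integrable_exp_neg_sq : Integrable fun r : ℝ => exp (-(r ^ 2)) := by
  simpa using integrable_exp_neg_mul_sq one_pos

theorem erfc_antitone : Antitone erfc := fun x y hxy =>
  mul_le_mul_of_nonneg_left
    (setIntegral_mono_set integrable_exp_neg_sq.integrableOn
      (.of_forall fun r => (exp_pos _).le) (Ioi_subset_Ioi hxy).eventuallyLE)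
    (by positivity)

theorem erfc_nonneg (x : ℝ) : 0 ≤ erfc x :=
  mul_nonneg (by positivity) (setIntegral_nonneg measurableSet_Ioi fun r _ => (exp_pos _).le)

theorem erfc_le (x : ℝ) : erfc x ≤ 2 / √π * exp (1 / 4) * exp (-x) := by
  have hexp : IntegrableOn (fun r => exp (1 / 4) * exp (-r)) (Ioi x) := by
    have h := (exp_neg_integrableOn_Ioi x one_pos).const_mul (exp (1 / 4))
    simp only [neg_one_mul] at h
    exact h
  have hle : ∫ r in Ioi x, exp (-(r ^ 2)) ≤ ∫ r in Ioi x, exp (1 / 4) * exp (-r) := by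
    refine setIntegral_mono_on integrable_exp_neg_sq.integrableOn hexp measurableSet_Ioi
      fun r _ => ?_
    rw [← exp_add, exp_le_exp]
    nlinarith [sq_nonneg (r - 1 / 2)]
  rw [integral_const_mul, integral_exp_neg_Ioi] at hle
  rw [erfc, mul_assoc]
  gcongr

theorem hasDerivAt_erfc (x : ℝ) : HasDerivAt erfc (-(2 / √π * exp (-(x ^ 2)))) x := by
  have h := (hasDerivAt_setIntegral_Ioi integrable_exp_neg_sq.integrableOn (sub_one_lt x)
    (by fun_prop)).const_mul (2 / √π)
  rwa [mul_neg] at h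

@[fun_prop]
theorem continuous_erfc : Continuous erfc :=
  continuous_iff_continuousAt.2 fun x => (hasDerivAt_erfc x).continuousAt

theorem tendsto_erfc_atTop : Tendsto erfc atTop (𝓝 0) := by
  have h := (tendsto_setIntegral_Ioi_atTop
    (integrable_exp_neg_sq.integrableOn (s := Ioi 0))).const_mul (2 / √π)
  rwa [mul_zero] at h

end Erfc

section Gamma0

theorem integrableOn_exp_neg_div_Ioi {x : ℝ} (hx : 0 < x) :
    IntegrableOn (fun t => exp (-t) / t) (Ioi x) := by
  have hexp : IntegrableOn (fun t => x⁻¹ * exp (-t)) (Ioi x) := by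
    have h := (exp_neg_integrableOn_Ioi x one_pos).const_mul (x⁻¹)
    simp only [neg_one_mul] at h
    exact h
  refine hexp.mono' ((ContinuousOn.div (by fun_prop) continuousOn_id fun t ht =>
    (hx.trans ht).ne').aestronglyMeasurable measurableSet_Ioi) ?_
  filter_upwards [ae_restrict_mem measurableSet_Ioi] with t ht
  have ht0 : 0 < t := hx.trans ht
  rw [norm_of_nonneg (by positivity), div_eq_inv_mul]
  gcongr
  exact le_of_lt ht

theorem hasDerivAt_Gamma0 {x : ℝ} (hx : 0 < x) : HasDerivAt Gamma0 (-(exp (-x) / x)) x :=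
  hasDerivAt_setIntegral_Ioi (integrableOn_exp_neg_div_Ioi (half_pos hx)) (half_lt_self hx)
    ((continuous_exp.comp continuous_neg).continuousAt.div continuousAt_id hx.ne')

theorem tendsto_Gamma0_atTop : Tendsto Gamma0 atTop (𝓝 0) :=
  tendsto_setIntegral_Ioi_atTop (integrableOn_exp_neg_div_Ioi one_pos)

end Gamma0

section SubInvSubstitution

theorem image_sub_inv_Ioi : (fun t : ℝ => t - t⁻¹) '' Ioi 0 = univ := by
  refine eq_univ_of_forall fun u => ?_
  have hw : u ^ 2 < √(u ^ 2 + 4) ^ 2 := by rw [sq_sqrt (by positivity)]; linarith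
  have hpos : 0 < u + √(u ^ 2 + 4) := by
    nlinarith [abs_lt_of_sq_lt_sq' hw (sqrt_nonneg _), sqrt_nonneg (u ^ 2 + 4)]
  refine ⟨(u + √(u ^ 2 + 4)) / 2, half_pos hpos, ?_⟩
  field_simp
  nlinarith [sq_sqrt (show (0 : ℝ) ≤ u ^ 2 + 4 by positivity)]

theorem strictMonoOn_sub_inv : StrictMonoOn (fun t : ℝ => t - t⁻¹) (Ioi 0) :=
  fun s hs t ht hst => by
    have := inv_strictAntiOn hs ht hst
    dsimp only
    linarith

theorem hasDerivAt_sub_inv {t : ℝ} (ht : t ≠ 0) :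
    HasDerivAt (fun t : ℝ => t - t⁻¹) (1 + (t ^ 2)⁻¹) t := by
  exact ((hasDerivAt_id' t).sub (hasDerivAt_inv ht)).congr_deriv (by ring)

variable {g : ℝ → ℝ}

theorem abs_deriv_smul_comp_sub_inv :
    (fun t : ℝ => |1 + (t ^ 2)⁻¹| • g (t - t⁻¹)) = fun t => (1 + (t ^ 2)⁻¹) * g (t - t⁻¹) := by
  ext t
  rw [abs_of_pos (by positivity), smul_eq_mul]

theorem integrableOn_comp_sub_inv (hg : Integrable g) :
    IntegrableOn (fun t => (1 + (t ^ 2)⁻¹) * g (t - t⁻¹)) (Ioi 0) := by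
  rw [← abs_deriv_smul_comp_sub_inv, ← integrableOn_image_iff_integrableOn_abs_deriv_smul
    measurableSet_Ioi (fun t ht => (hasDerivAt_sub_inv (ne_of_gt ht)).hasDerivWithinAt)
    strictMonoOn_sub_inv.injOn, image_sub_inv_Ioi, integrableOn_univ]
  exact hg

theorem integral_comp_sub_inv :
    ∫ t in Ioi 0, (1 + (t ^ 2)⁻¹) * g (t - t⁻¹) = ∫ u, g u := by
  rw [← abs_deriv_smul_comp_sub_inv, ← integral_image_eq_integral_abs_deriv_smul
    measurableSet_Ioi (fun t ht => (hasDerivAt_sub_inv (ne_of_gt ht)).hasDerivWithinAt)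
    strictMonoOn_sub_inv.injOn, image_sub_inv_Ioi, setIntegral_univ]

end SubInvSubstitution

theorem exp_neg_mul_sq_add_four (x u : ℝ) :
    exp (-(x ^ 2 * (u ^ 2 + 4))) = exp (-(4 * x ^ 2)) * exp (-x ^ 2 * u ^ 2) := by
  rw [← exp_add]
  ring_nf

theorem integrable_exp_neg_mul_sq_add_four {x : ℝ} (hx : 0 < x) :
    Integrable fun u : ℝ => exp (-(x ^ 2 * (u ^ 2 + 4))) := by
  simp_rw [exp_neg_mul_sq_add_four]
  exact (integrable_exp_neg_mul_sq (by positivity)).const_mul _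

theorem integral_exp_neg_mul_sq_add_four {x : ℝ} (hx : 0 < x) :
    ∫ u : ℝ, exp (-(x ^ 2 * (u ^ 2 + 4))) = √π * exp (-(4 * x ^ 2)) / x := by
  simp_rw [exp_neg_mul_sq_add_four]
  rw [integral_const_mul, integral_gaussian, sqrt_div pi_pos.le, sqrt_sq hx.le]
  ring

section ErfcInvAddIntegral

def erfcInvAddIntegral (m : ℝ) : ℝ := ∫ t in Ioi 0, erfc (m * (t⁻¹ + t)) / t

theorem continuousOn_erfc_mul_inv_add_div (m : ℝ) :
    ContinuousOn (fun t : ℝ => erfc (m * (t⁻¹ + t)) / t) (Ioi 0) := by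
  have h0 : ∀ t ∈ Ioi (0 : ℝ), t ≠ 0 := fun t ht => ne_of_gt ht
  fun_prop (disch := assumption)

theorem integrableOn_erfc_mul_inv_add_div {m : ℝ} (hm : 0 < m) :
    IntegrableOn (fun t : ℝ => erfc (m * (t⁻¹ + t)) / t) (Ioi 0) := by
  set C := 2 / √π * exp (1 / 4)
  refine ((exp_neg_integrableOn_Ioi 0 hm).const_mul (C * m⁻¹ * exp (-1))).mono'
    ((continuousOn_erfc_mul_inv_add_div m).aestronglyMeasurable measurableSet_Ioi) ?_
  filter_upwards [ae_restrict_mem measurableSet_Ioi] with t (ht : 0 < t)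
  have hsplit : exp (-(m * (t⁻¹ + t))) = exp (-(m * t⁻¹)) * exp (-m * t) := by
    rw [← exp_add]
    ring_nf
  rw [norm_of_nonneg (div_nonneg (erfc_nonneg _) ht.le)]
  calc erfc (m * (t⁻¹ + t)) / t ≤ C * exp (-(m * (t⁻¹ + t))) / t := by
        gcongr
        exact erfc_le _
    _ = C * m⁻¹ * (m * t⁻¹ * exp (-(m * t⁻¹))) * exp (-m * t) := by
        rw [hsplit]
        field_simp
    _ ≤ C * m⁻¹ * exp (-1) * exp (-m * t) := by
        gcongr
        exact mul_exp_neg_le_exp_neg_one _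

theorem hasDerivAt_erfc_mul_inv_add_div {t : ℝ} (ht : t ≠ 0) (x : ℝ) :
    HasDerivAt (fun x => erfc (x * (t⁻¹ + t)) / t)
      (-((1 + (t ^ 2)⁻¹) * (2 / √π * exp (-(x ^ 2 * ((t - t⁻¹) ^ 2 + 4)))))) x := by
  have hsq : (x * (t⁻¹ + t)) ^ 2 = x ^ 2 * ((t - t⁻¹) ^ 2 + 4) := by
    field_simp
    ring
  refine (((hasDerivAt_erfc _).comp x (hasDerivAt_mul_const (t⁻¹ + t))).div_const t).congr_deriv ?_
  rw [hsq]
  field_simp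
  ring

theorem hasDerivAt_erfcInvAddIntegral {m : ℝ} (hm : 0 < m) :
    HasDerivAt erfcInvAddIntegral (-(2 * exp (-(4 * m ^ 2)) / m)) m := by
  set g : ℝ → ℝ → ℝ := fun x u => 2 / √π * exp (-(x ^ 2 * (u ^ 2 + 4)))
  have hg : ∀ x, 0 < x → IntegrableOn (fun t => (1 + (t ^ 2)⁻¹) * g x (t - t⁻¹)) (Ioi 0) :=
    fun x hx => integrableOn_comp_sub_inv ((integrable_exp_neg_mul_sq_add_four hx).const_mul _)
  have hbound : ∀ᵐ t ∂volume.restrict (Ioi 0), ∀ x ∈ Ioi (m / 2),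
      ‖-((1 + (t ^ 2)⁻¹) * g x (t - t⁻¹))‖ ≤ (1 + (t ^ 2)⁻¹) * g (m / 2) (t - t⁻¹) := by
    filter_upwards with t x (hx : m / 2 < x)
    rw [norm_neg, norm_of_nonneg (by positivity)]
    simp only [g]
    gcongr
  have hderiv : ∀ᵐ t ∂volume.restrict (Ioi 0), ∀ x ∈ Ioi (m / 2),
      HasDerivAt (fun x => erfc (x * (t⁻¹ + t)) / t) (-((1 + (t ^ 2)⁻¹) * g x (t - t⁻¹))) x := by
    filter_upwards [ae_restrict_mem measurableSet_Ioi] with t (ht : 0 < t) x _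
    exact hasDerivAt_erfc_mul_inv_add_div ht.ne' x
  have hval : ∫ t in Ioi 0, -((1 + (t ^ 2)⁻¹) * g m (t - t⁻¹)) = -(2 * exp (-(4 * m ^ 2)) / m) := by
    rw [integral_neg, integral_comp_sub_inv (g := g m), integral_const_mul,
      integral_exp_neg_mul_sq_add_four hm]
    field_simp
  obtain ⟨-, hd⟩ := hasDerivAt_integral_of_dominated_loc_of_deriv_le
    (Ioi_mem_nhds (half_lt_self hm))
    (.of_forall fun x => (continuousOn_erfc_mul_inv_add_div x).aestronglyMeasurable
      measurableSet_Ioi)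
    (integrableOn_erfc_mul_inv_add_div hm) (hg m hm).neg.aestronglyMeasurable hbound
    (hg (m / 2) (half_pos hm)) hderiv
  rwa [hval] at hd

theorem tendsto_erfcInvAddIntegral_atTop : Tendsto erfcInvAddIntegral atTop (𝓝 0) := by
  have h := tendsto_integral_filter_of_dominated_convergence
    (μ := volume.restrict (Ioi 0)) (l := atTop)
    (F := fun m t => erfc (m * (t⁻¹ + t)) / t) (f := 0) (fun t => erfc (1 * (t⁻¹ + t)) / t)
    (.of_forall fun m => (continuousOn_erfc_mul_inv_add_div m).aestronglyMeasurable
      measurableSet_Ioi) ?_ (integrableOn_erfc_mul_inv_add_div one_pos) ?_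
  · simp only [Pi.zero_apply, integral_zero] at h
    exact h
  · filter_upwards [eventually_ge_atTop 1] with m hm
    filter_upwards [ae_restrict_mem measurableSet_Ioi] with t (ht : 0 < t)
    rw [norm_of_nonneg (div_nonneg (erfc_nonneg _) ht.le)]
    gcongr
    exact erfc_antitone (by nlinarith [show 0 < t⁻¹ + t by positivity])
  · filter_upwards [ae_restrict_mem measurableSet_Ioi] with t (ht : 0 < t)
    simpa using (tendsto_erfc_atTop.comp
      (tendsto_id.atTop_mul_const (show 0 < t⁻¹ + t by positivity))).div_const t

theorem hasDerivAt_Gamma0_four_mul_sq {m : ℝ} (hm : 0 < m) :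
    HasDerivAt (fun m => Gamma0 (4 * m ^ 2)) (-(2 * exp (-(4 * m ^ 2)) / m)) m := by
  refine ((hasDerivAt_Gamma0 (by positivity)).comp m
    ((hasDerivAt_pow 2 m).const_mul 4)).congr_deriv ?_
  field_simp
  ring

theorem erfcInvAddIntegral_eq_Gamma0 {m : ℝ} (hm : 0 < m) :
    erfcInvAddIntegral m = Gamma0 (4 * m ^ 2) := by
  set H := fun m => erfcInvAddIntegral m - Gamma0 (4 * m ^ 2)
  have hH : ∀ x ∈ Ioi (0 : ℝ), HasDerivAt H 0 x := fun x hx => by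
    have h := (hasDerivAt_erfcInvAddIntegral hx).sub (hasDerivAt_Gamma0_four_mul_sq hx)
    rwa [sub_self] at h
  have hconst : ∀ y ∈ Ioi m, H y = H m := fun y hy =>
    isOpen_Ioi.is_const_of_deriv_eq_zero isPreconnected_Ioi
      (fun x hx => (hH x hx).differentiableAt.differentiableWithinAt)
      (fun x hx => (hH x hx).deriv) (hm.trans hy) hm
  have hlim : Tendsto H atTop (𝓝 0) := by
    simpa using tendsto_erfcInvAddIntegral_atTop.sub
      (tendsto_Gamma0_atTop.comp ((tendsto_pow_atTop two_ne_zero).const_mul_atTop four_pos))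
  have hHm : H m = 0 := tendsto_nhds_unique
    (tendsto_const_nhds.congr' (eventually_gt_atTop m |>.mono fun y hy => (hconst y hy).symm))
    hlim
  exact sub_eq_zero.1 hHm

end ErfcInvAddIntegral

theorem integral_erfc_mul_inv_mul_add_mul_div {a b c : ℝ} (ha : 0 < a) (hb : 0 < b) (hc : 0 < c) :
    IntegrableOn (fun t => erfc (c * (t⁻¹ * a + t * b)) / t) (Ioi 0) ∧
      ∫ t in Ioi 0, erfc (c * (t⁻¹ * a + t * b)) / t = Gamma0 (4 * c ^ 2 * (a * b)) := by
  obtain ⟨p, hp, rfl⟩ : ∃ p, 0 < p ∧ p ^ 2 = a := ⟨√a, sqrt_pos.2 ha, sq_sqrt ha.le⟩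
  obtain ⟨q, hq, rfl⟩ : ∃ q, 0 < q ∧ q ^ 2 = b := ⟨√b, sqrt_pos.2 hb, sq_sqrt hb.le⟩
  set f := fun t : ℝ => erfc (c * (t⁻¹ * p ^ 2 + t * q ^ 2)) / t
  have hσ : 0 < p / q := div_pos hp hq
  have hscale : EqOn (fun s => f (p / q * s))
      (fun s => (p / q)⁻¹ * (erfc (c * p * q * (s⁻¹ + s)) / s)) (Ioi 0) := by
    intro s (hs : 0 < s)
    have harg : c * ((p / q * s)⁻¹ * p ^ 2 + p / q * s * q ^ 2) = c * p * q * (s⁻¹ + s) := by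
      field_simp
    simp only [f, harg]
    field_simp
  have hm : 0 < c * p * q := by positivity
  have hmul := integral_comp_mul_left_Ioi f 0 hσ
  rw [mul_zero, setIntegral_congr_fun measurableSet_Ioi hscale, integral_const_mul,
    smul_eq_mul] at hmul
  constructor
  · have h := (integrableOn_Ioi_comp_mul_left_iff f 0 hσ).1
      (IntegrableOn.congr_fun ((integrableOn_erfc_mul_inv_add_div hm).const_mul _)
        hscale.symm measurableSet_Ioi)
    rwa [mul_zero] at h
  · rw [← mul_left_cancel₀ (inv_ne_zero hσ.ne') hmul]
    refine (erfcInvAddIntegral_eq_Gamma0 hm).trans ?_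
    ring_nf

theorem Real.sign_div_of_pos {x c : ℝ} (hc : 0 < c) : Real.sign (x / c) = Real.sign x := by
  rcases lt_trichotomy x 0 with h | rfl | h
  · rw [sign_of_neg h, sign_of_neg (div_neg_of_neg_of_pos h hc)]
  · simp
  · rw [sign_of_pos h, sign_of_pos (div_pos h hc)]

theorem sign_abs_inv_mul_add_mul_of_mul_pos {x₁ x₂ t : ℝ} (hx : 0 < x₁ * x₂) (ht : 0 < t) :
    Real.sign (t⁻¹ * x₁ + t * x₂) = Real.sign x₁ ∧
      |t⁻¹ * x₁ + t * x₂| = t⁻¹ * |x₁| + t * |x₂| := by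
  rcases mul_pos_iff.1 hx with ⟨h₁, h₂⟩ | ⟨h₁, h₂⟩
  · have hpos : 0 < t⁻¹ * x₁ + t * x₂ := by positivity
    rw [sign_of_pos hpos, sign_of_pos h₁, abs_of_pos hpos, abs_of_pos h₁, abs_of_pos h₂]
    exact ⟨rfl, rfl⟩
  · have hneg : t⁻¹ * x₁ + t * x₂ < 0 :=
      add_neg (mul_neg_of_pos_of_neg (inv_pos.2 ht) h₁) (mul_neg_of_pos_of_neg ht h₂)
    rw [sign_of_neg hneg, sign_of_neg h₁, abs_of_neg hneg, abs_of_neg h₁, abs_of_neg h₂]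
    exact ⟨rfl, by ring⟩

theorem integral_sign_mul_erfc_abs_inv_mul_add_mul_div {c x₁ x₂ : ℝ} (hc : 0 < c)
    (hx : 0 < x₁ * x₂) :
    IntegrableOn (fun t => Real.sign (t⁻¹ * x₁ + t * x₂) * erfc (c * |t⁻¹ * x₁ + t * x₂|) / t)
        (Ioi 0) ∧
      ∫ t in Ioi 0, Real.sign (t⁻¹ * x₁ + t * x₂) * erfc (c * |t⁻¹ * x₁ + t * x₂|) / t =
        Real.sign x₁ * Gamma0 (4 * c ^ 2 * (x₁ * x₂)) := by
  have hx₁ : 0 < |x₁| := abs_pos.2 (left_ne_zero_of_mul hx.ne')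
  have hx₂ : 0 < |x₂| := abs_pos.2 (right_ne_zero_of_mul hx.ne')
  obtain ⟨hint, hval⟩ := integral_erfc_mul_inv_mul_add_mul_div hx₁ hx₂ hc
  have heq : EqOn
      (fun t => Real.sign (t⁻¹ * x₁ + t * x₂) * erfc (c * |t⁻¹ * x₁ + t * x₂|) / t)
      (fun t => Real.sign x₁ * (erfc (c * (t⁻¹ * |x₁| + t * |x₂|)) / t)) (Ioi 0) := by
    intro t (ht : 0 < t)
    obtain ⟨hsign, habs⟩ := sign_abs_inv_mul_add_mul_of_mul_pos hx ht
    simp only [hsign, habs, mul_div_assoc]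
  refine ⟨IntegrableOn.congr_fun (hint.const_mul _) heq.symm measurableSet_Ioi, ?_⟩
  rw [setIntegral_congr_fun measurableSet_Ioi heq, integral_const_mul, hval, ← abs_mul,
    abs_of_pos hx]

theorem phiStar_iota_div {N : ℕ} (hN : N ≠ 0) (τ : ℂ) (t x₁ x₂ : ℝ) :
    phiStar τ (iota N t x₁ x₂).1 (iota N t x₁ x₂).2 / t =
      eC (-((x₁ * x₂ / N : ℝ) : ℂ) * τ) *
        ((Real.sign (t⁻¹ * x₁ + t * x₂) * erfc (√(π * τ.im / N) * |t⁻¹ * x₁ + t * x₂|) / t :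
          ℝ) : ℂ) := by
  rcases eq_or_ne t 0 with rfl | ht
  · -- both sides are junk zeros: `0⁻¹ = 0`, `sign 0 = 0` and `x / 0 = 0`
    simp [phiStar, iota]
  have hN' : (0 : ℝ) < 2 * N := by positivity
  have hs : 0 < √(2 * N) := sqrt_pos.2 hN'
  have hquad : ((t⁻¹ * x₁ - t * x₂) / √(2 * N)) ^ 2 - ((t⁻¹ * x₁ + t * x₂) / √(2 * N)) ^ 2 =
      -(2 * (x₁ * x₂ / N)) := by
    rw [div_pow, div_pow, sq_sqrt hN'.le]
    field_simp
    ring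
  have hexp : (((((t⁻¹ * x₁ - t * x₂) / √(2 * N) : ℝ) : ℂ) ^ 2 -
      (((t⁻¹ * x₁ + t * x₂) / √(2 * N) : ℝ) : ℂ) ^ 2) / 2) * τ = -((x₁ * x₂ / N : ℝ) : ℂ) * τ := by
    rw [← Complex.ofReal_pow, ← Complex.ofReal_pow, ← Complex.ofReal_sub, hquad]
    push_cast
    ring
  have herfc : √(2 * π * τ.im) * |(t⁻¹ * x₁ + t * x₂) / √(2 * N)| =
      √(π * τ.im / N) * |t⁻¹ * x₁ + t * x₂| := by
    rw [abs_div, abs_of_pos hs, show π * τ.im / N = 2 * π * τ.im / (2 * N) by field_simp,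
      sqrt_div' _ hN'.le]
    ring
  simp only [phiStar, iota]
  rw [hexp, Real.sign_div_of_pos hs, herfc]
  push_cast
  ring

/-- with `n = x₁x₂/N > 0`,
`∫_0^∞ φ*_τ(ι_t(x₁,x₂)) dt/t = sgn(x₁)·e(-nτ)·Γ(0,4πvn)`, the integral converging
absolutely; equivalently
`∫_0^∞ sgn(t⁻¹x₁+tx₂)·erfc(√(πv/N)|t⁻¹x₁+tx₂|) dt/t = sgn(x₁)·Γ(0,4πvn)`. -/
theorem stmt13 (N : ℕ) (hN : 0 < N) (τ : ℂ) (hτ : 0 < τ.im) (x₁ x₂ : ℝ)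
    (hx : 0 < x₁ * x₂) :
    IntegrableOn (fun t : ℝ =>
      phiStar τ (iota N t x₁ x₂).1 (iota N t x₁ x₂).2 / (t : ℂ)) (Set.Ioi 0) ∧
    (∫ t in Set.Ioi (0 : ℝ), phiStar τ (iota N t x₁ x₂).1 (iota N t x₁ x₂).2 / (t : ℂ)) =
      (Real.sign x₁ : ℂ) * eC (-((x₁ * x₂ / N : ℝ) : ℂ) * τ) *
        (Gamma0 (4 * Real.pi * τ.im * (x₁ * x₂ / N)) : ℂ) ∧
    IntegrableOn (fun t : ℝ =>
      Real.sign (t⁻¹ * x₁ + t * x₂) *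
        erfc (Real.sqrt (Real.pi * τ.im / N) * |t⁻¹ * x₁ + t * x₂|) / t) (Set.Ioi 0) ∧
    (∫ t in Set.Ioi (0 : ℝ), Real.sign (t⁻¹ * x₁ + t * x₂) *
        erfc (Real.sqrt (Real.pi * τ.im / N) * |t⁻¹ * x₁ + t * x₂|) / t) =
      Real.sign x₁ * Gamma0 (4 * Real.pi * τ.im * (x₁ * x₂ / N)) := by
  have hc : 0 < √(π * τ.im / N) := sqrt_pos.2 (by positivity)
  obtain ⟨hint, hval⟩ := integral_sign_mul_erfc_abs_inv_mul_add_mul_div hc hx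
  have harg : 4 * √(π * τ.im / N) ^ 2 * (x₁ * x₂) = 4 * π * τ.im * (x₁ * x₂ / N) := by
    rw [sq_sqrt (by positivity)]
    ring
  rw [harg] at hval
  simp_rw [phiStar_iota_div hN.ne']
  refine ⟨hint.ofReal.const_mul _, ?_, hint, hval⟩
  rw [integral_const_mul, integral_complex_ofReal, hval]
  push_cast
  ring

end
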